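/- (Vizing extension) For every proper partial (Δ+1)-edge-coloring φ of a finite simple graph G of maximum degree Δ and every uncolored edge e, there exists a connected subgraph H ⊆ G containing e, whose only φ-uncolored edge is e, and a proper partial coloring ψ with domain dom(φ) ∪ E(H) agreeing with φ outside E(H). In particular, every graph of maximum degree Δ admits a proper (Δ+1)-edge-coloring. -/

import Mathlib

open SimpleGraph

variable {V : Type*} [DecidableEq V]

/-- Two edges (as unordered pairs of vertices) are adjacent: distinct and sharing an endpoint. -/
def EdgeAdj (e f : Sym2 V) : Prop := e ≠ f ∧ ∃ v, v ∈ e ∧ v ∈ f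

/-- A proper partial edge-coloring of `G` with colors `{1,…,Δ+1}` (as `Fin (Δ+1)`):
its domain consists of edges of `G`, and adjacent colored edges get distinct colors. -/
def IsProperPartial (G : SimpleGraph V) (Δ : ℕ)
    (φ : Sym2 V → Option (Fin (Δ + 1))) : Prop :=
  (∀ e, (φ e).isSome → e ∈ G.edgeSet) ∧
  ∀ e f, EdgeAdj e f → (φ e).isSome → φ e ≠ φ f

/-- The set `M(φ,x)` of colors missing at `x`. -/
def missingColors (G : SimpleGraph V) (Δ : ℕ)
    (φ : Sym2 V → Option (Fin (Δ + 1))) (x : V) : Set (Fin (Δ + 1)) :=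
  {c | ∀ y, G.Adj x y → φ s(x, y) ≠ some c}

/-- `Shift φ e₀ e₁`: move the color of `e₁` to `e₀`, uncolor `e₁`, keep all else. -/
def Shift {α : Type*} (φ : Sym2 V → Option α) (e₀ e₁ : Sym2 V) :
    Sym2 V → Option α :=
  fun e => if e = e₀ then φ e₁ else if e = e₁ then none else φ e

/-- `(e₀, e₁)` is a `φ`-shiftable pair. -/
def ShiftablePair (G : SimpleGraph V) (Δ : ℕ) (φ : Sym2 V → Option (Fin (Δ + 1)))
    (e₀ e₁ : Sym2 V) : Prop :=
  EdgeAdj e₀ e₁ ∧ e₀ ∈ G.edgeSet ∧ φ e₀ = none ∧ (φ e₁).isSome ∧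
    IsProperPartial G Δ (Shift φ e₀ e₁)

/-- Shifting a coloring along a chain (list of edges). -/
def ShiftChain {α : Type*} : List (Sym2 V) → (Sym2 V → Option α) → (Sym2 V → Option α)
  | [], φ => φ
  | [_], φ => φ
  | e₀ :: e₁ :: rest, φ => ShiftChain (e₁ :: rest) (Shift φ e₀ e₁)

/-- A chain is `φ`-shiftable: each consecutive pair is shiftable w.r.t. the current coloring
(for a single-edge chain we require the edge to be an uncolored edge of `G`). -/
def ChainShiftable (G : SimpleGraph V) (Δ : ℕ) :
    List (Sym2 V) → (Sym2 V → Option (Fin (Δ + 1))) → Prop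
  | [], _ => True
  | [e], φ => φ e = none ∧ e ∈ G.edgeSet
  | e₀ :: e₁ :: rest, φ =>
      ShiftablePair G Δ φ e₀ e₁ ∧ ChainShiftable G Δ (e₁ :: rest) (Shift φ e₀ e₁)

/-- The spanning subgraph `G(φ, αβ)` of edges colored `α` or `β`. -/
def abSub (G : SimpleGraph V) (Δ : ℕ) (φ : Sym2 V → Option (Fin (Δ + 1)))
    (α β : Fin (Δ + 1)) : SimpleGraph V where
  Adj x y := G.Adj x y ∧ (φ s(x, y) = some α ∨ φ s(x, y) = some β)
  symm := by
    constructor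
    intro x y h
    refine ⟨h.1.symm, ?_⟩
    rw [Sym2.eq_swap]
    exact h.2
  loopless := ⟨fun x h => G.loopless.irrefl x h.1⟩

/-- A chain is `φ`-happy: it is `φ`-shiftable and its last edge is happy after shifting. -/
def ChainHappy (G : SimpleGraph V) (Δ : ℕ) (C : List (Sym2 V))
    (φ : Sym2 V → Option (Fin (Δ + 1))) : Prop :=
  ChainShiftable G Δ C φ ∧
    ∃ x y : V, C.getLast? = some s(x, y) ∧
      (missingColors G Δ (ShiftChain C φ) x ∩ missingColors G Δ (ShiftChain C φ) y).Nonempty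

/-!
Vizing's fan argument. Let `α` be missing at `x` and let `y = Y 0, …, Y k` be a maximal fan at
`x`, with `β` missing at `Y k`. If `β` is also missing at `x`, shifting the colour of each fan
edge `x Y (i+1)` onto `x Y i` and colouring `x Y k` with `β` extends the colouring. Otherwise
`β` sits on some fan edge `x Y (j+1)`, by maximality, and is missing at `Y j`. Swap `α` and `β`
on the `αβ`-Kempe chain of `x`: it is a path from `x`, so it cannot reach both `Y j` and `Y k`.
After the swap `β` is missing at `x` and at the end of the fan `Y 0, …, Y k` (if the chain
reaches `Y j`) or `Y 0, …, Y j` (if it does not), and rotating that fan finishes. Every edge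
changed lies on the fan or the chain, hence in the component of `x` in the graph of coloured
edges and `xy`.
-/

section Basic

omit [DecidableEq V]

variable {G : SimpleGraph V} {Δ : ℕ} {φ : Sym2 V → Option (Fin (Δ + 1))}

theorem EdgeAdj.symm {e f : Sym2 V} (h : EdgeAdj e f) : EdgeAdj f e :=
  ⟨h.1.symm, h.2.imp fun _ hv => hv.symm⟩

theorem EdgeAdj.exists_eq_mk {e f : Sym2 V} (h : EdgeAdj e f) :
    ∃ v a b, e = s(v, a) ∧ f = s(v, b) ∧ a ≠ b := by
  obtain ⟨hne, v, hve, hvf⟩ := h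
  obtain ⟨a, rfl⟩ := Sym2.mem_iff_exists.mp hve
  obtain ⟨b, rfl⟩ := Sym2.mem_iff_exists.mp hvf
  exact ⟨v, a, b, rfl, rfl, fun hab => hne (hab ▸ rfl)⟩

theorem edgeAdj_mk {v a b : V} (h : a ≠ b) : EdgeAdj s(v, a) s(v, b) :=
  ⟨fun he => h (Sym2.congr_right.mp he), v, Sym2.mem_mk_left v a, Sym2.mem_mk_left v b⟩

namespace IsProperPartial

theorem adj (hφ : IsProperPartial G Δ φ) {a b : V} (h : (φ s(a, b)).isSome) : G.Adj a b :=
  hφ.1 _ h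

theorem eq_of_eq_some (hφ : IsProperPartial G Δ φ) {v a b : V} {c : Fin (Δ + 1)}
    (ha : φ s(v, a) = some c) (hb : φ s(v, b) = some c) : a = b := by
  by_contra hab
  exact hφ.2 _ _ (edgeAdj_mk hab) (by simp [ha]) (ha.trans hb.symm)

theorem ne_some_of_mem_missingColors (hφ : IsProperPartial G Δ φ) {v : V} {f : Sym2 V}
    {c : Fin (Δ + 1)} (hc : c ∈ missingColors G Δ φ v) (hv : v ∈ f) : φ f ≠ some c := by
  obtain ⟨w, rfl⟩ := Sym2.mem_iff_exists.mp hv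
  exact fun h => hc w (hφ.adj (by simp [h])) h

end IsProperPartial

theorem missingColors_nonempty [Fintype V] [DecidableRel G.Adj] (hΔ : G.maxDegree ≤ Δ)
    (φ : Sym2 V → Option (Fin (Δ + 1))) (v : V) : (missingColors G Δ φ v).Nonempty := by
  by_contra! h
  have hall : ∀ c, ∃ w : G.neighborSet v, φ s(v, w) = some c := fun c => by
    have : c ∉ missingColors G Δ φ v := h ▸ Set.notMem_empty c
    simpa [missingColors] using this
  choose w hw using hall
  have hinj : Function.Injective w := fun c d hcd =>
    Option.some_injective _ ((hw c).symm.trans (hcd ▸ hw d))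
  have hcard := Fintype.card_le_of_injective w hinj
  rw [Fintype.card_fin, card_neighborSet_eq_degree] at hcard
  have := G.degree_le_maxDegree v
  omega

def ExtendsWithin {κ : Type*} (φ ψ : Sym2 V → Option κ) (e : Sym2 V) (S : Set (Sym2 V)) :
    Prop :=
  (∀ f, (ψ f).isSome ↔ (φ f).isSome ∨ f = e) ∧ ∀ f ∉ S, ψ f = φ f

theorem ExtendsWithin.mono {κ : Type*} {φ ψ : Sym2 V → Option κ} {e : Sym2 V}
    {S T : Set (Sym2 V)} (h : ExtendsWithin φ ψ e S) (hST : S ⊆ T) : ExtendsWithin φ ψ e T :=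
  ⟨h.1, fun f hf => h.2 f fun hS => hf (hST hS)⟩

theorem ExtendsWithin.of_isSome_eq {κ : Type*} {φ φ' ψ : Sym2 V → Option κ} {e : Sym2 V}
    {S : Set (Sym2 V)} (h : ExtendsWithin φ' ψ e S) (hdom : ∀ f, (φ' f).isSome = (φ f).isSome)
    (hS : ∀ f ∉ S, φ' f = φ f) : ExtendsWithin φ ψ e S :=
  ⟨fun f => by rw [h.1, hdom], fun f hf => (h.2 f hf).trans (hS f hf)⟩

end Basic

section Fan

omit [DecidableEq V]

variable {G : SimpleGraph V} {Δ : ℕ} {φ : Sym2 V → Option (Fin (Δ + 1))} {x z : V}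
  {Y : ℕ → V} {k : ℕ}

structure IsFan (G : SimpleGraph V) (Δ : ℕ) (φ : Sym2 V → Option (Fin (Δ + 1))) (x : V)
    (Y : ℕ → V) (k : ℕ) : Prop where
  adj : ∀ i ≤ k, G.Adj x (Y i)
  injOn : Set.InjOn Y (Set.Iic k)
  uncolored : φ s(x, Y 0) = none
  colored : ∀ i < k, ∃ c ∈ missingColors G Δ φ (Y i), φ s(x, Y (i + 1)) = some c

namespace IsFan

theorem mk_ne (h : IsFan G Δ φ x Y k) {i j : ℕ} (hi : i ≤ k) (hj : j ≤ k) (hij : i ≠ j) :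
    s(x, Y i) ≠ s(x, Y j) :=
  fun he => hij (h.injOn hi hj (Sym2.congr_right.mp he))

theorem mono (h : IsFan G Δ φ x Y k) {t : ℕ} (ht : t ≤ k) : IsFan G Δ φ x Y t where
  adj i hi := h.adj i (hi.trans ht)
  injOn := h.injOn.mono (Set.Iic_subset_Iic.mpr ht)
  uncolored := h.uncolored
  colored i hi := h.colored i (by omega)

theorem lt_card [Fintype V] (h : IsFan G Δ φ x Y k) : k < Fintype.card V := by
  have := Finset.card_le_card_of_injOn Y (s := Finset.range (k + 1)) (t := Finset.univ)
    (fun _ _ => Finset.mem_coe.mpr (Finset.mem_univ _))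
    (h.injOn.mono fun i hi => Nat.lt_succ_iff.mp (Finset.mem_range.mp hi))
  simpa using this

theorem snoc (h : IsFan G Δ φ x Y k) {c : Fin (Δ + 1)} (hz : G.Adj x z)
    (hzY : ∀ i ≤ k, Y i ≠ z) (hc : c ∈ missingColors G Δ φ (Y k)) (hxz : φ s(x, z) = some c) :
    IsFan G Δ φ x (Function.update Y (k + 1) z) (k + 1) := by
  have hY : ∀ i ≤ k, Function.update Y (k + 1) z i = Y i := fun i hi =>
    Function.update_of_ne (by omega) _ _
  refine ⟨fun i hi => ?_, fun i hi j hj hij => ?_, by rw [hY 0 (Nat.zero_le k)]; exact h.uncolored,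
    fun i hi => ?_⟩
  · rcases Nat.le_succ_iff.mp hi with hi | rfl
    · rw [hY i hi]; exact h.adj i hi
    · rw [Function.update_self]; exact hz
  · simp only [Set.mem_Iic] at hi hj
    rcases Nat.le_succ_iff.mp hi with hi | rfl <;> rcases Nat.le_succ_iff.mp hj with hj | rfl
    · rw [hY i hi, hY j hj] at hij; exact h.injOn hi hj hij
    · rw [hY i hi, Function.update_self] at hij; exact absurd hij (hzY i hi)
    · rw [hY j hj, Function.update_self] at hij; exact absurd hij.symm (hzY j hj)
    · rfl
  · rcases (Nat.lt_succ_iff.mp hi).lt_or_eq with hi | rfl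
    · rw [hY i hi.le, hY (i + 1) hi]; exact h.colored i hi
    · rw [hY i le_rfl, Function.update_self]; exact ⟨c, hc, hxz⟩

end IsFan

theorem exists_maximal_isFan [Fintype V] {y : V} (hxy : G.Adj x y) (hunc : φ s(x, y) = none) :
    ∃ Y k, IsFan G Δ φ x Y k ∧ Y 0 = y ∧ ∀ z c, G.Adj x z → φ s(x, z) = some c →
      c ∈ missingColors G Δ φ (Y k) → ∃ i ≤ k, Y i = z := by
  by_contra! hmax
  have hall : ∀ k, ∃ Y, IsFan G Δ φ x Y k ∧ Y 0 = y := by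
    intro k
    induction k with
    | zero => exact ⟨fun _ => y, ⟨fun _ _ => hxy, fun i hi j hj _ => by simp_all, hunc,
        fun i hi => absurd hi (Nat.not_lt_zero i)⟩, rfl⟩
    | succ k ih =>
      obtain ⟨Y, hY, hY₀⟩ := ih
      obtain ⟨z, c, hz, hxz, hc, hzY⟩ := hmax Y k hY hY₀
      exact ⟨_, hY.snoc hz hzY hc hxz, by simp [hY₀]⟩
  obtain ⟨Y, hY, -⟩ := hall (Fintype.card V)
  exact hY.lt_card.false

end Fan

section MaxDegreeTwo

omit [DecidableEq V]

variable {G : SimpleGraph V} {x : V}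

theorem SimpleGraph.Walk.IsPath.getVert_eq_getVert
    (hdeg : ∀ v a b c, G.Adj v a → G.Adj v b → G.Adj v c → a = b ∨ a = c ∨ b = c)
    {u w : V} (hx : (G.neighborSet x).Subsingleton) {p : G.Walk x u} {q : G.Walk x w}
    (hp : p.IsPath) (hq : q.IsPath) {i : ℕ} (hip : i ≤ p.length) (hiq : i ≤ q.length) :
    p.getVert i = q.getVert i := by
  induction i using Nat.strong_induction_on with
  | _ i ih =>
  obtain _ | _ | i := i
  · simp
  · exact hx (by simpa using p.adj_getVert_succ (i := 0) (by omega))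
      (by simpa using q.adj_getVert_succ (i := 0) (by omega))
  · have h₀ := ih i (by omega) (by omega) (by omega)
    have h₁ := ih (i + 1) (by omega) (by omega) (by omega)
    have hp₂ : p.getVert i ≠ p.getVert (i + 2) := fun h => by
      have := hp.getVert_injOn (by simp; omega) (by simp; omega) h
      omega
    have hq₂ : q.getVert i ≠ q.getVert (i + 2) := fun h => by
      have := hq.getVert_injOn (by simp; omega) (by simp; omega) h
      omega
    rcases hdeg _ _ _ _ (p.adj_getVert_succ (i := i) (by omega)).symm
      (p.adj_getVert_succ (i := i + 1) (by omega))
      (h₁ ▸ q.adj_getVert_succ (i := i + 1) (by omega)) with h | h | h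
    · exact absurd h hp₂
    · exact absurd (h₀ ▸ h) hq₂
    · exact h

theorem SimpleGraph.eq_of_reachable_of_subsingleton_neighborSet
    (hdeg : ∀ v a b c, G.Adj v a → G.Adj v b → G.Adj v c → a = b ∨ a = c ∨ b = c)
    {u w : V} (hx : (G.neighborSet x).Subsingleton) (hu : (G.neighborSet u).Subsingleton)
    (hw : (G.neighborSet w).Subsingleton) (hxu : x ≠ u) (hxw : x ≠ w)
    (hru : G.Reachable x u) (hrw : G.Reachable x w) : u = w := by
  obtain ⟨p, hp⟩ := hru.exists_isPath
  obtain ⟨q, hq⟩ := hrw.exists_isPath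
  wlog hpq : p.length ≤ q.length generalizing u w
  · exact (this hw hu hxw hxu hrw hru q hq p hp (by omega)).symm
  have hu_eq : q.getVert p.length = u := by
    rw [← hp.getVert_eq_getVert hdeg hx hq le_rfl hpq, p.getVert_length]
  rcases hpq.lt_or_eq with hlt | heq
  · obtain ⟨n, hn⟩ := Nat.exists_eq_add_one_of_ne_zero (n := p.length) fun h =>
      hxu (by simpa [h] using hu_eq)
    rw [hn] at hu_eq hlt
    have hne := hu (hu_eq ▸ (q.adj_getVert_succ (i := n) (by omega)).symm)
      (hu_eq ▸ q.adj_getVert_succ (i := n + 1) hlt)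
    have := hq.getVert_injOn (by simp; omega) (by simp; omega) hne
    omega
  · rw [heq, q.getVert_length] at hu_eq
    exact hu_eq.symm

end MaxDegreeTwo

theorem Option.map_swap_of_ne {κ : Type*} [DecidableEq κ] {a b : κ} {o : Option κ}
    (ha : o ≠ some a) (hb : o ≠ some b) : o.map (Equiv.swap a b) = o := by
  cases o with
  | none => rfl
  | some c =>
    rw [Option.map_some, Equiv.swap_apply_of_ne_of_ne (by rintro rfl; exact ha rfl)
      (by rintro rfl; exact hb rfl)]

section Kempe

omit [DecidableEq V]

variable {G : SimpleGraph V} {Δ : ℕ} {φ : Sym2 V → Option (Fin (Δ + 1))} {x z : V}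
  {Y : ℕ → V} {k : ℕ} {α β : Fin (Δ + 1)}

namespace IsProperPartial

theorem abSub_adj (hφ : IsProperPartial G Δ φ) {a b : V}
    (h : φ s(a, b) = some α ∨ φ s(a, b) = some β) : (abSub G Δ φ α β).Adj a b :=
  ⟨hφ.adj (by rcases h with h | h <;> simp [h]), h⟩

theorem eq_or_eq_or_eq_of_abSub_adj (hφ : IsProperPartial G Δ φ) {v a b c : V}
    (ha : (abSub G Δ φ α β).Adj v a) (hb : (abSub G Δ φ α β).Adj v b)
    (hc : (abSub G Δ φ α β).Adj v c) : a = b ∨ a = c ∨ b = c := by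
  rcases ha.2 with ha | ha <;> rcases hb.2 with hb | hb <;> rcases hc.2 with hc | hc <;>
    first
    | exact Or.inl (hφ.eq_of_eq_some ha hb)
    | exact Or.inr (Or.inl (hφ.eq_of_eq_some ha hc))
    | exact Or.inr (Or.inr (hφ.eq_of_eq_some hb hc))

theorem subsingleton_abSub_neighborSet (hφ : IsProperPartial G Δ φ) {v : V}
    (h : α ∈ missingColors G Δ φ v ∨ β ∈ missingColors G Δ φ v) :
    ((abSub G Δ φ α β).neighborSet v).Subsingleton := by
  intro a ha b hb
  rcases h with h | h <;> rcases ha.2 with ha' | ha' <;> rcases hb.2 with hb' | hb' <;>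
    first
    | exact hφ.eq_of_eq_some ha' hb'
    | exact absurd ha' (h a ha.1)
    | exact absurd hb' (h b hb.1)

end IsProperPartial

open Classical in
/-- Edges touching the `αβ`-component of `z` that are not coloured `α` or `β` are fixed by the
swap, so this recolours exactly the Kempe chain of `z`. -/
noncomputable def kempeFlip (G : SimpleGraph V) (Δ : ℕ) (φ : Sym2 V → Option (Fin (Δ + 1)))
    (α β : Fin (Δ + 1)) (z : V) : Sym2 V → Option (Fin (Δ + 1)) :=
  fun f => if ∃ v ∈ f, (abSub G Δ φ α β).Reachable z v then (φ f).map (Equiv.swap α β) else φ f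

theorem kempeFlip_isSome (f : Sym2 V) :
    (kempeFlip G Δ φ α β z f).isSome = (φ f).isSome := by
  unfold kempeFlip
  split_ifs <;> simp

open Classical in
theorem kempeFlip_mk (hφ : IsProperPartial G Δ φ) (v w : V) :
    kempeFlip G Δ φ α β z s(v, w) = if (abSub G Δ φ α β).Reachable z v
      then (φ s(v, w)).map (Equiv.swap α β) else φ s(v, w) := by
  by_cases hv : (abSub G Δ φ α β).Reachable z v
  · rw [if_pos hv, kempeFlip, if_pos ⟨v, Sym2.mem_mk_left v w, hv⟩]
  rw [if_neg hv, kempeFlip]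
  split_ifs with h
  · obtain ⟨u, hu, hr⟩ := h
    rcases Sym2.mem_iff.mp hu with rfl | rfl
    · exact absurd hr hv
    have hcol : ¬ (φ s(v, u) = some α ∨ φ s(v, u) = some β) := fun hc =>
      hv (hr.trans (hφ.abSub_adj hc).symm.reachable)
    exact Option.map_swap_of_ne (not_or.mp hcol).1 (not_or.mp hcol).2
  · rfl

theorem IsProperPartial.kempeFlip (hφ : IsProperPartial G Δ φ) :
    IsProperPartial G Δ (kempeFlip G Δ φ α β z) := by
  refine ⟨fun f hf => hφ.1 f (by rwa [kempeFlip_isSome] at hf), fun f g hfg hf heq => ?_⟩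
  obtain ⟨v, a, b, rfl, rfl, hab⟩ := hfg.exists_eq_mk
  rw [kempeFlip_isSome] at hf
  rw [kempeFlip_mk hφ, kempeFlip_mk hφ] at heq
  refine hφ.2 _ _ (edgeAdj_mk hab) hf ?_
  split_ifs at heq
  exacts [Option.map_injective (Equiv.injective _) heq, heq]

theorem swap_mem_missingColors_kempeFlip (hφ : IsProperPartial G Δ φ) {v : V}
    (hv : (abSub G Δ φ α β).Reachable z v) {c : Fin (Δ + 1)} (hc : c ∈ missingColors G Δ φ v) :
    Equiv.swap α β c ∈ missingColors G Δ (kempeFlip G Δ φ α β z) v := by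
  intro w hw h
  rw [kempeFlip_mk hφ, if_pos hv, ← Option.map_some] at h
  exact hc w hw (Option.map_injective (Equiv.injective _) h)

theorem missingColors_kempeFlip_of_not_reachable (hφ : IsProperPartial G Δ φ) {v : V}
    (hv : ¬ (abSub G Δ φ α β).Reachable z v) :
    missingColors G Δ (kempeFlip G Δ φ α β z) v = missingColors G Δ φ v := by
  ext c
  simp only [missingColors, Set.mem_ofPred_eq, kempeFlip_mk hφ, if_neg hv]

theorem exists_abSub_of_kempeFlip_ne (hφ : IsProperPartial G Δ φ) {f : Sym2 V}
    (h : kempeFlip G Δ φ α β z f ≠ φ f) :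
    ∃ a b, f = s(a, b) ∧ (abSub G Δ φ α β).Adj a b ∧ (abSub G Δ φ α β).Reachable z a := by
  unfold kempeFlip at h
  split_ifs at h with hr
  · obtain ⟨a, ha, hr⟩ := hr
    obtain ⟨b, rfl⟩ := Sym2.mem_iff_exists.mp ha
    refine ⟨a, b, rfl, hφ.abSub_adj ?_, hr⟩
    by_contra! hcol
    exact h (Option.map_swap_of_ne hcol.1 hcol.2)
  · exact absurd rfl h

theorem IsFan.kempeFlip (h : IsFan G Δ φ x Y k) (hφ : IsProperPartial G Δ φ)
    (hα : α ∈ missingColors G Δ φ x)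
    (hβ : ∀ i < k, φ s(x, Y (i + 1)) = some β → (abSub G Δ φ α β).Reachable x (Y i)) :
    IsFan G Δ (_root_.kempeFlip G Δ φ α β x) x Y k where
  adj := h.adj
  injOn := h.injOn
  uncolored := by rw [kempeFlip_mk hφ, h.uncolored]; split_ifs <;> rfl
  colored i hi := by
    obtain ⟨c, hc, hxc⟩ := h.colored i hi
    refine ⟨Equiv.swap α β c, ?_, by rw [kempeFlip_mk hφ, if_pos .rfl, hxc, Option.map_some]⟩
    by_cases hr : (abSub G Δ φ α β).Reachable x (Y i)
    · exact swap_mem_missingColors_kempeFlip hφ hr hc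
    · rw [missingColors_kempeFlip_of_not_reachable hφ hr, Equiv.swap_apply_of_ne_of_ne]
      · exact hc
      · rintro rfl; exact hα _ (h.adj (i + 1) hi) hxc
      · rintro rfl; exact hr (hβ i hi hxc)

/-- The `αβ`-Kempe chain of `x` is a path starting at `x`, so it cannot reach both `Y j` and
`Y k`: the flip leaves `β` missing at the end of a fan, `Y k` or `Y j`. -/
theorem IsFan.exists_isFan_kempeFlip (h : IsFan G Δ φ x Y k) (hφ : IsProperPartial G Δ φ)
    (hα : α ∈ missingColors G Δ φ x) (hβ : β ∈ missingColors G Δ φ (Y k)) {j : ℕ} (hj : j < k)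
    (hxj : φ s(x, Y (j + 1)) = some β) :
    ∃ t, IsFan G Δ (_root_.kempeFlip G Δ φ α β x) x Y t ∧
      β ∈ missingColors G Δ (_root_.kempeFlip G Δ φ α β x) (Y t) := by
  have hβj : β ∈ missingColors G Δ φ (Y j) := by
    obtain ⟨c, hc, hxc⟩ := h.colored j hj
    rwa [Option.some_injective _ (hxc.symm.trans hxj)] at hc
  have hβ_eq : ∀ i < k, φ s(x, Y (i + 1)) = some β → i = j := fun i hi hxi => by
    have := h.injOn (x₁ := i + 1) (x₂ := j + 1) (by simp; omega) (by simp; omega)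
      (hφ.eq_of_eq_some hxi hxj)
    omega
  by_cases hr : (abSub G Δ φ α β).Reachable x (Y j)
  · refine ⟨k, h.kempeFlip hφ hα fun i hi hxi => hβ_eq i hi hxi ▸ hr, ?_⟩
    rw [missingColors_kempeFlip_of_not_reachable hφ fun hk => ?_]
    · exact hβ
    have := h.injOn (x₁ := j) (x₂ := k) (by simp; omega) (by simp)
      (eq_of_reachable_of_subsingleton_neighborSet (fun _ _ _ _ => hφ.eq_or_eq_or_eq_of_abSub_adj)
        (hφ.subsingleton_abSub_neighborSet (.inl hα))
        (hφ.subsingleton_abSub_neighborSet (.inr hβj))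
        (hφ.subsingleton_abSub_neighborSet (.inr hβ))
        (h.adj j hj.le).ne (h.adj k le_rfl).ne hr hk)
    omega
  · refine ⟨j, (h.mono hj.le).kempeFlip hφ hα fun i hi hxi => ?_, ?_⟩
    · exact absurd (hβ_eq i (by omega) hxi) hi.ne
    · rwa [missingColors_kempeFlip_of_not_reachable hφ hr]

end Kempe

section ColoredComponent

omit [DecidableEq V]

def coloredGraph {κ : Type*} (G : SimpleGraph V) (φ : Sym2 V → Option κ) (e : Sym2 V) :
    SimpleGraph V where
  Adj a b := G.Adj a b ∧ ((φ s(a, b)).isSome ∨ s(a, b) = e)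
  symm := ⟨fun _ _ h => ⟨h.1.symm, by rw [Sym2.eq_swap]; exact h.2⟩⟩
  loopless := ⟨fun a h => G.loopless.irrefl a h.1⟩

/-- The subgraph `H` of the theorem. -/
def coloredComponent {κ : Type*} (G : SimpleGraph V) (φ : Sym2 V → Option κ) (x y : V) :
    G.Subgraph :=
  (SimpleGraph.toSubgraph (coloredGraph G φ s(x, y)) fun _ _ h => h.1).induce
    ((coloredGraph G φ s(x, y)).connectedComponentMk x).supp

variable {κ : Type*} {G : SimpleGraph V} {φ : Sym2 V → Option κ} {x y : V}

theorem coloredComponent_connected : (coloredComponent G φ x y).Connected :=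
  ⟨ConnectedComponent.connected_toSimpleGraph _ |>.map
    ⟨fun v => ⟨v.1, v.2⟩, fun {a b} hab => ⟨a.2, b.2, hab⟩⟩ fun v => ⟨⟨v.1, v.2⟩, rfl⟩⟩

theorem mk_mem_coloredComponent_edgeSet {a b : V} (h : (coloredGraph G φ s(x, y)).Adj a b)
    (hr : (coloredGraph G φ s(x, y)).Reachable x a) :
    s(a, b) ∈ (coloredComponent G φ x y).edgeSet :=
  ⟨ConnectedComponent.eq.mpr hr.symm, ConnectedComponent.eq.mpr (hr.trans h.reachable).symm, h⟩

theorem IsFan.subset_coloredComponent_edgeSet {Δ : ℕ} {φ' : Sym2 V → Option (Fin (Δ + 1))}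
    {Y : ℕ → V} {t : ℕ} (h : IsFan G Δ φ' x Y t) (hdom : ∀ f, (φ' f).isSome = (φ f).isSome) :
    {f | ∃ i ≤ t, f = s(x, Y i)} ⊆ (coloredComponent G φ x (Y 0)).edgeSet := by
  rintro _ ⟨i, hi, rfl⟩
  refine mk_mem_coloredComponent_edgeSet ⟨h.adj i hi, ?_⟩ .rfl
  obtain _ | i := i
  · exact .inr rfl
  · obtain ⟨c, -, hc⟩ := h.colored i hi
    exact .inl (by rw [← hdom, hc]; rfl)

theorem isSome_or_eq_of_mem_coloredComponent_edgeSet {f : Sym2 V}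
    (hf : f ∈ (coloredComponent G φ x y).edgeSet) : (φ f).isSome ∨ f = s(x, y) := by
  induction f using Sym2.ind with
  | _ a b => exact hf.2.2.2

end ColoredComponent

section Rotation

variable {G : SimpleGraph V} {Δ : ℕ} {φ : Sym2 V → Option (Fin (Δ + 1))} {x : V} {Y : ℕ → V}
  {k : ℕ} {β : Fin (Δ + 1)}

theorem IsProperPartial.update_none (hφ : IsProperPartial G Δ φ) (e : Sym2 V) :
    IsProperPartial G Δ (Function.update φ e none) := by
  have h : ∀ f, (Function.update φ e none f).isSome → Function.update φ e none f = φ f := by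
    intro f
    rw [Function.update_apply]
    split_ifs <;> simp
  refine ⟨fun f hf => hφ.1 f (h f hf ▸ hf), fun f g hfg hf heq => hφ.2 f g hfg (h f hf ▸ hf) ?_⟩
  rw [← h f hf, heq, h g (heq ▸ hf)]

theorem IsProperPartial.update_some (hφ : IsProperPartial G Δ φ) {a b : V} {c : Fin (Δ + 1)}
    (hab : G.Adj a b) (ha : c ∈ missingColors G Δ φ a) (hb : c ∈ missingColors G Δ φ b) :
    IsProperPartial G Δ (Function.update φ s(a, b) (some c)) := by
  have hfree : ∀ f, EdgeAdj s(a, b) f → φ f ≠ some c := by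
    rintro f ⟨-, v, hv, hvf⟩
    rcases Sym2.mem_iff.mp hv with rfl | rfl
    exacts [hφ.ne_some_of_mem_missingColors ha hvf, hφ.ne_some_of_mem_missingColors hb hvf]
  refine ⟨fun f hf => ?_, fun f g hfg hf heq => ?_⟩
  · rcases eq_or_ne f s(a, b) with rfl | hne
    · exact hab
    · exact hφ.1 f (by rwa [Function.update_of_ne hne] at hf)
  · rcases eq_or_ne f s(a, b) with rfl | hf' <;> rcases eq_or_ne g s(a, b) with rfl | hg'
    · exact hfg.1 rfl
    · rw [Function.update_self, Function.update_of_ne hg'] at heq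
      exact hfree g hfg heq.symm
    · rw [Function.update_self, Function.update_of_ne hf'] at heq
      exact hfree f hfg.symm heq
    · rw [Function.update_of_ne hf', Function.update_of_ne hg'] at heq
      exact hφ.2 f g hfg (by rwa [Function.update_of_ne hf'] at hf) heq

theorem mem_missingColors_update_none {v : V} {c : Fin (Δ + 1)} (e : Sym2 V)
    (hc : c ∈ missingColors G Δ φ v) : c ∈ missingColors G Δ (Function.update φ e none) v := by
  intro w hw h
  rw [Function.update_apply] at h
  split_ifs at h
  exact hc w hw h

theorem shift_eq_update {κ : Type*} (φ : Sym2 V → Option κ) (e₀ e₁ : Sym2 V) :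
    Shift φ e₀ e₁ = Function.update (Function.update φ e₁ none) e₀ (φ e₁) := by
  funext f
  simp only [Shift, Function.update_apply]

theorem mem_missingColors_shift {e₀ e₁ : Sym2 V} {v : V} {c : Fin (Δ + 1)}
    (hc : c ∈ missingColors G Δ φ v) (h₁ : φ e₁ ≠ some c) :
    c ∈ missingColors G Δ (Shift φ e₀ e₁) v := by
  intro w hw h
  simp only [Shift] at h
  split_ifs at h
  exacts [h₁ h, hc w hw h]

theorem IsProperPartial.shift (hφ : IsProperPartial G Δ φ) {a b : V} {c : Fin (Δ + 1)}
    (hxa : G.Adj x a) (hb : φ s(x, b) = some c) (hc : c ∈ missingColors G Δ φ a) :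
    IsProperPartial G Δ (Shift φ s(x, a) s(x, b)) := by
  have hcx : c ∈ missingColors G Δ (Function.update φ s(x, b) none) x := by
    intro w _ h
    have hwb : s(x, w) ≠ s(x, b) := by
      rintro hw
      simp [hw] at h
    rw [Function.update_of_ne hwb] at h
    exact hwb (by rw [hφ.eq_of_eq_some h hb])
  rw [shift_eq_update, hb]
  exact (hφ.update_none _).update_some hxa hcx (mem_missingColors_update_none _ hc)

theorem IsFan.shift (h : IsFan G Δ φ x Y (k + 1)) (hφ : IsProperPartial G Δ φ) :
    IsFan G Δ (Shift φ s(x, Y 0) s(x, Y 1)) x (fun i => Y (i + 1)) k where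
  adj i hi := h.adj (i + 1) (by omega)
  injOn i hi j hj hij := by
    simp only [Set.mem_Iic] at hi hj
    have := h.injOn (x₁ := i + 1) (x₂ := j + 1) (by simp; omega) (by simp; omega) hij
    omega
  uncolored := by simp [Shift, h.mk_ne (i := 1) (j := 0) (by omega) (by omega) one_ne_zero]
  colored i hi := by
    obtain ⟨c, hc, hxc⟩ := h.colored (i + 1) (by omega)
    refine ⟨c, mem_missingColors_shift hc fun h₁ => ?_, ?_⟩
    · exact h.mk_ne (i := 1) (j := i + 2) (by omega) (by omega) (by omega)
        (by rw [hφ.eq_of_eq_some h₁ hxc])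
    · simp only [Shift]
      rw [if_neg (h.mk_ne (by omega) (by omega) (by omega)),
        if_neg (h.mk_ne (by omega) (by omega) (by omega))]
      exact hxc

/-- Shift the colour of each `x Y (i+1)` onto `x Y i`; then `x Y k` is free and takes `β`. -/
theorem IsFan.exists_extension (h : IsFan G Δ φ x Y k) (hφ : IsProperPartial G Δ φ)
    (hβx : β ∈ missingColors G Δ φ x) (hβk : β ∈ missingColors G Δ φ (Y k)) :
    ∃ ψ, IsProperPartial G Δ ψ ∧ ExtendsWithin φ ψ s(x, Y 0) {f | ∃ i ≤ k, f = s(x, Y i)} := by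
  induction k generalizing φ Y with
  | zero =>
    refine ⟨Function.update φ s(x, Y 0) (some β), hφ.update_some (h.adj 0 le_rfl) hβx hβk,
      fun f => ?_, fun f hf => Function.update_of_ne (fun he => hf ⟨0, le_rfl, he⟩) _ _⟩
    rw [Function.update_apply]
    split_ifs with hf <;> simp [hf]
  | succ k ih =>
    obtain ⟨c, hc, hx₁⟩ := h.colored 0 k.succ_pos
    have hβ₁ : φ s(x, Y 1) ≠ some β := hβx _ (h.adj 1 (by omega))
    obtain ⟨ψ, hψ, hdom, hS⟩ := ih (h.shift hφ) (hφ.shift (h.adj 0 (by omega)) hx₁ hc)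
      (mem_missingColors_shift hβx hβ₁) (mem_missingColors_shift hβk hβ₁)
    have h₀₁ := h.mk_ne (i := 0) (j := 1) (by omega) (by omega) zero_ne_one
    refine ⟨ψ, hψ, fun f => ?_, fun f hf => ?_⟩
    · rw [hdom f]
      by_cases h₀ : f = s(x, Y 0) <;> by_cases h₁ : f = s(x, Y 1)
      · exact absurd (h₀.symm.trans h₁) h₀₁
      all_goals simp [Shift, h₀, h₁, hx₁, h.uncolored]
    · have h₀ : f ≠ s(x, Y 0) := fun he => hf ⟨0, by omega, he⟩
      have h₁ : f ≠ s(x, Y 1) := fun he => hf ⟨1, by omega, he⟩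
      rw [hS f fun ⟨i, hi, he⟩ => hf ⟨i + 1, by omega, he⟩]
      simp [Shift, h₀, h₁]

end Rotation

theorem exists_extendsWithin_coloredComponent [Fintype V] {G : SimpleGraph V}
    [DecidableRel G.Adj] {Δ : ℕ} (hΔ : G.maxDegree ≤ Δ) {φ : Sym2 V → Option (Fin (Δ + 1))}
    (hφ : IsProperPartial G Δ φ) {x y : V} (hxy : G.Adj x y) (hunc : φ s(x, y) = none) :
    ∃ ψ, IsProperPartial G Δ ψ ∧ ExtendsWithin φ ψ s(x, y) (coloredComponent G φ x y).edgeSet := by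
  obtain ⟨α, hα⟩ := missingColors_nonempty hΔ φ x
  obtain ⟨Y, k, hfan, rfl, hmax⟩ := exists_maximal_isFan hxy hunc
  obtain ⟨β, hβ⟩ := missingColors_nonempty hΔ φ (Y k)
  by_cases hβx : β ∈ missingColors G Δ φ x
  · obtain ⟨ψ, hψ, hext⟩ := hfan.exists_extension hφ hβx hβ
    exact ⟨ψ, hψ, hext.mono (hfan.subset_coloredComponent_edgeSet fun _ => rfl)⟩
  obtain ⟨z, hz, hxz⟩ : ∃ z, G.Adj x z ∧ φ s(x, z) = some β := by
    simpa [missingColors] using hβx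
  obtain ⟨_ | j, hj, rfl⟩ := hmax z β hz hxz hβ
  · exact absurd (hfan.uncolored.symm.trans hxz) (Option.some_ne_none β).symm
  obtain ⟨t, hfan', hβt⟩ := hfan.exists_isFan_kempeFlip hφ hα hβ hj hxz
  have hβx' : β ∈ missingColors G Δ (kempeFlip G Δ φ α β x) x := by
    simpa using swap_mem_missingColors_kempeFlip (α := α) (β := β) hφ .rfl hα
  obtain ⟨ψ, hψ, hext⟩ := hfan'.exists_extension hφ.kempeFlip hβx' hβt
  refine ⟨ψ, hψ, (hext.mono (hfan'.subset_coloredComponent_edgeSet kempeFlip_isSome)).of_isSome_eq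
    kempeFlip_isSome fun f hf => ?_⟩
  have hle : abSub G Δ φ α β ≤ coloredGraph G φ s(x, Y 0) := fun _ _ h =>
    ⟨h.1, .inl (by rcases h.2 with h | h <;> simp [h])⟩
  by_contra hne
  obtain ⟨a, b, rfl, hab, hr⟩ := exists_abSub_of_kempeFlip_ne hφ hne
  exact hf (mk_mem_coloredComponent_edgeSet (hle hab) (hr.mono hle))

theorem exists_isProperPartial_total [Fintype V] {G : SimpleGraph V} [DecidableRel G.Adj]
    {Δ : ℕ} (hΔ : G.maxDegree ≤ Δ) {φ : Sym2 V → Option (Fin (Δ + 1))}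
    (hφ : IsProperPartial G Δ φ) :
    ∃ c : Sym2 V → Option (Fin (Δ + 1)), IsProperPartial G Δ c ∧
      ∀ f ∈ G.edgeSet, (c f).isSome := by
  induction hn : (G.edgeFinset.filter (φ · = none)).card using Nat.strong_induction_on
    generalizing φ with
  | _ n ih =>
  by_cases hall : ∀ f ∈ G.edgeSet, (φ f).isSome
  · exact ⟨φ, hφ, hall⟩
  obtain ⟨f, hf, hnone⟩ := not_forall₂.mp hall
  induction f using Sym2.ind with
  | _ a b =>
  have hnone' := Option.not_isSome_iff_eq_none.mp hnone
  obtain ⟨ψ, hψ, hdom, -⟩ := exists_extendsWithin_coloredComponent hΔ hφ hf hnone'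
  have hψ_ne : ψ s(a, b) ≠ none := Option.isSome_iff_ne_none.mp ((hdom _).mpr (.inr rfl))
  refine ih _ (hn ▸ Finset.card_lt_card ?_) hψ rfl
  refine (Finset.ssubset_iff_of_subset fun g hg => ?_).mpr
    ⟨s(a, b), by simp [hf, hnone'], by simp [hψ_ne]⟩
  simp only [Finset.mem_filter] at hg ⊢
  refine ⟨hg.1, Option.not_isSome_iff_eq_none.mp fun hs => ?_⟩
  simpa [hg.2] using (hdom g).mpr (.inl hs)

/-- Vizing extension: every uncolored edge `e` of a proper partial
`(Δ+1)`-edge-coloring lies in a connected subgraph `H ⊆ G` whose only uncolored edge is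
`e` and over which `φ` extends: there is a proper partial coloring with domain
`dom(φ) ∪ E(H)` agreeing with `φ` off `E(H)`. In particular `G` has a proper
`(Δ+1)`-edge-coloring. -/
theorem vizing_extension [Fintype V] (G : SimpleGraph V) [DecidableRel G.Adj] (Δ : ℕ)
    (hΔ : G.maxDegree ≤ Δ) (φ : Sym2 V → Option (Fin (Δ + 1)))
    (hφ : IsProperPartial G Δ φ)
    (x y : V) (hadj : G.Adj x y) (hunc : φ s(x, y) = none) :
    (∃ H : G.Subgraph, H.Connected ∧ s(x, y) ∈ H.edgeSet ∧
      (∀ f ∈ H.edgeSet, φ f = none → f = s(x, y)) ∧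
      ∃ ψ : Sym2 V → Option (Fin (Δ + 1)), IsProperPartial G Δ ψ ∧
        (∀ f, (ψ f).isSome ↔ ((φ f).isSome ∨ f ∈ H.edgeSet)) ∧
        ∀ f ∉ H.edgeSet, ψ f = φ f) ∧
    (∃ c : Sym2 V → Option (Fin (Δ + 1)), IsProperPartial G Δ c ∧
      ∀ f ∈ G.edgeSet, (c f).isSome) := by
  obtain ⟨ψ, hψ, hdom, hS⟩ := exists_extendsWithin_coloredComponent hΔ hφ hadj hunc
  have hxyH : s(x, y) ∈ (coloredComponent G φ x y).edgeSet :=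
    mk_mem_coloredComponent_edgeSet ⟨hadj, .inr rfl⟩ .rfl
  refine ⟨⟨coloredComponent G φ x y, coloredComponent_connected, hxyH, fun f hf hnone => ?_,
    ψ, hψ, fun f => ?_, hS⟩, exists_isProperPartial_total hΔ hφ⟩
  · simpa [hnone] using isSome_or_eq_of_mem_coloredComponent_edgeSet hf
  · rw [hdom]
    exact ⟨Or.imp_right fun h => h ▸ hxyH,
      fun h => h.elim .inl isSome_or_eq_of_mem_coloredComponent_edgeSet⟩
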